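/- arXiv:2411.19884 — 6 statements merged into one kernel-verified Lean document; each statement's English description precedes it below -/
import Mathlib

section
/- Let i₀i₁i₂⋯ be an interaction sequence with associated sets V(n). Then for all n: (1) if m ∈ V(n) then V(i_m) ⊆ V(n); and (2) if k, m ∈ V(n) and k < m, then k ∈ V(i_m). -/
set_option linter.deprecated false

/-- `Vset i n` is the set `V(n)` associated to a pointer sequence `i`:
`V(0) = ∅`, `V(n+1) = {n} ∪ V(i n)`.  (The `min` is a harmless truncation making the
recursion well-founded; for a pointer sequence `i n ≤ n`, so `min (i n) n = i n`.) -/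
def Vset (i : ℕ → ℕ) : ℕ → Finset ℕ
  | 0 => ∅
  | n + 1 => insert n (Vset i (min (i n) n))
  decreasing_by exact Nat.lt_succ_of_le (min_le_right _ _)

/-- An (infinite) pointer sequence: `i 0 = 0` and `i (n+1) < n+1`. -/
def IsPointerSeq (i : ℕ → ℕ) : Prop := i 0 = 0 ∧ ∀ n, i (n + 1) < n + 1

/-- An (infinite) interaction sequence: a pointer sequence with `i (n+1) ∈ V(n+1)`. -/
def IsInteractionSeq (i : ℕ → ℕ) : Prop :=
  IsPointerSeq i ∧ ∀ n, i (n + 1) ∈ Vset i (n + 1)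

/-- `W(0) = ∅`, `W(n+1) = {n, i n} ∪ W(i n)`. -/
def Wset (i : ℕ → ℕ) : ℕ → Finset ℕ
  | 0 => ∅
  | n + 1 => insert n (insert (i n) (Wset i (min (i n) n)))
  decreasing_by exact Nat.lt_succ_of_le (min_le_right _ _)

/-- Length of the pointer chain `n, i n, i (i n), …, 0` (stopping at `0`). -/
def chainLen (i : ℕ → ℕ) : ℕ → ℕ
  | 0 => 1
  | n + 1 => chainLen i (min (i (n + 1)) n) + 1
  decreasing_by exact Nat.lt_succ_of_le (min_le_right _ _)

/-- The interaction sequence `i` has depth at most `ν`: every pointer chain has length `≤ ν+1`. -/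
def DepthAtMost (i : ℕ → ℕ) (ν : ℕ) : Prop := ∀ n, chainLen i n ≤ ν + 1

/-- `I` is isolated for `i`: `i n ∈ I → n ∈ I`. -/
def Isolated (i : ℕ → ℕ) (I : Set ℕ) : Prop := ∀ n, i n ∈ I → n ∈ I

/-- Finite versions: conditions imposed only on indices `< n`. -/
def IsPointerSeqUpTo (n : ℕ) (i : ℕ → ℕ) : Prop :=
  (0 < n → i 0 = 0) ∧ ∀ m, m + 1 < n → i (m + 1) < m + 1

def IsInteractionSeqUpTo (n : ℕ) (i : ℕ → ℕ) : Prop :=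
  IsPointerSeqUpTo n i ∧ ∀ m, m + 1 < n → i (m + 1) ∈ Vset i (m + 1)

def IsolatedUpTo (n : ℕ) (i : ℕ → ℕ) (I : Set ℕ) : Prop :=
  ∀ m, m < n → i m ∈ I → m ∈ I

def DepthAtMostUpTo (n : ℕ) (i : ℕ → ℕ) (ν : ℕ) : Prop :=
  ∀ m, m < n → chainLen i m ≤ ν + 1

/-- An ordinal interaction sequence `(α₀,i₀)⋯(α_{n-1},i_{n-1}) αₙ`:
`pairs` lists `(α_k, i_k)` for `k < n`, and `last` is `αₙ`. -/
structure OIS where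
  pairs : List (Ordinal.{0} × ℕ)
  last : Ordinal.{0}

namespace OIS

/-- The pointer `i_k` (junk for `k ≥ n`). -/
def ptrAt (u : OIS) (k : ℕ) : ℕ := (u.pairs.getD k (0, 0)).2

/-- The ordinal `α_k`, for `k ≤ n` (`α_n` is `u.last`). -/
def ordAt (u : OIS) (k : ℕ) : Ordinal :=
  if k < u.pairs.length then (u.pairs.getD k (0, 0)).1 else u.last

/-- `u` is a genuine ordinal interaction sequence: the pointers form an interaction
sequence, and `α_{m+1} < α_{i_m}` for all `0 < m < n`. -/
def valid (u : OIS) : Prop :=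
  IsInteractionSeqUpTo u.pairs.length u.ptrAt ∧
  ∀ m, 0 < m → m + 1 ≤ u.pairs.length → u.ordAt (m + 1) < u.ordAt (u.ptrAt m)

/-- All ordinals of `u` are `< α`. -/
def below (u : OIS) (α : Ordinal) : Prop := ∀ k, k ≤ u.pairs.length → u.ordAt k < α

/-- `u` has depth at most `ν`. -/
def depthLE (u : OIS) (ν : ℕ) : Prop := DepthAtMostUpTo u.pairs.length u.ptrAt ν

/-- `u ⪯ v`. -/
def le (u v : OIS) : Prop :=
  u.pairs.length ≤ v.pairs.length ∧
  (∀ k, k < u.pairs.length → u.pairs.getD k (0, 0) = v.pairs.getD k (0, 0)) ∧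
  v.ordAt u.pairs.length ≤ u.last

/-- `u ≺ v`. -/
def prec (u v : OIS) : Prop := u.le v ∧ u ≠ v

/-- The prefix `(α₀,i₀)⋯(α_{m-1},i_{m-1}) α_m` of `u`, for `m ≤ n`. -/
def prefixAt (u : OIS) (m : ℕ) : OIS := ⟨u.pairs.take m, u.ordAt m⟩

end OIS

/-- Membership in the tree `T(ν, α)` of ordinal interaction sequences of depth at
most `ν` below `α`, rooted at the empty sequence (`none`). -/
def InTree (ν : ℕ) (α : Ordinal.{0}) : Option OIS → Prop
  | none => True
  | some u => u.valid ∧ u.depthLE ν ∧ u.below α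

/-- `≺` extended to the root: the empty sequence strictly precedes everything. -/
def OptPrec : Option OIS → Option OIS → Prop
  | none, some _ => True
  | some u, some v => u.prec v
  | _, _ => False

/-- The "descends in the tree `T(ν,α)`" relation (for computing heights/ranks). -/
def treeRel (ν : ℕ) (α : Ordinal.{0}) (x y : Option OIS) : Prop :=
  OptPrec y x ∧ InTree ν α x ∧ InTree ν α y

/-- `c_0(α) = α·2`, `c_{ν+1}(α) = 3 ^ c_ν(α)`. -/
noncomputable def cfun : ℕ → Ordinal.{0} → Ordinal.{0}
  | 0, α => α * 2
  | ν + 1, α => 3 ^ cfun ν α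

lemma mem_Vset_lt (i : ℕ → ℕ) : ∀ n, ∀ m ∈ Vset i n, m < n := by
  intro n
  induction n using Nat.strong_induction_on with
  | _ n ih =>
    match n with
    | 0 => simp [Vset]
    | n + 1 =>
      intro m hm
      rw [Vset] at hm
      rcases Finset.mem_insert.1 hm with h | h
      · omega
      · have := ih (min (i n) n) (Nat.lt_succ_of_le (min_le_right _ _)) m h
        omega

lemma Vset_succ (i : ℕ → ℕ) (h : IsPointerSeq i) (n : ℕ) :
    Vset i (n + 1) = insert n (Vset i (i n)) := by
  have : min (i n) n = i n := by
    rcases n with _ | n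
    · simp [h.1]
    · have := h.2 n; omega
  rw [Vset, this]

/-- For an interaction sequence `i` with associated sets `V(n)`:
if `m ∈ V(n)` then `V(i m) ⊆ V(n)`, and if `k, m ∈ V(n)` with `k < m` then `k ∈ V(i m)`. -/
theorem Vset_subset_and_mem_of_interaction (i : ℕ → ℕ) (hi : IsInteractionSeq i) (n : ℕ) :
    (∀ m ∈ Vset i n, Vset i (i m) ⊆ Vset i n) ∧
    (∀ k m, k ∈ Vset i n → m ∈ Vset i n → k < m → k ∈ Vset i (i m)) := by
  induction n using Nat.strong_induction_on with
  | _ n ih =>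
    match n with
    | 0 => constructor <;> simp [Vset]
    | n + 1 =>
      rw [Vset_succ i hi.1] at *
      have hin : i n ≤ n := by
        rcases n with _ | n
        · simp [hi.1.1]
        · have := hi.1.2 n; omega
      have ihn := ih (i n) (Nat.lt_succ_of_le hin)
      constructor
      · intro m hm
        rcases Finset.mem_insert.1 hm with h | h
        · subst h
          exact fun x hx => Finset.mem_insert_of_mem hx
        · exact fun x hx => Finset.mem_insert_of_mem (ihn.1 m h hx)
      · intro k m hk hm hkm
        have hkn : k < n := by
          rcases Finset.mem_insert.1 hm with h | h
          · omega
          · have := mem_Vset_lt i (i n) m h; omega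
        have hk' : k ∈ Vset i (i n) := by
          rcases Finset.mem_insert.1 hk with h | h
          · omega
          · exact h
        rcases Finset.mem_insert.1 hm with h | h
        · subst h
          exact hk'
        · exact ihn.2 k m hk' h hkm
end

section
/- Let i₀i₁i₂⋯ be an interaction sequence, and let h : ℕ → ℕ be defined by h(0) = 0 and h(n+1) = n. Then for every n for which i_n is defined, there exists s ∈ ℕ such that i_n = (h∘i)^s(h(n)), where (h∘i)^s denotes the s-th iterate of the map m ↦ h(i_m). -/
set_option linter.deprecated false

lemma mem_Vset_iterate (i : ℕ → ℕ) (hi : IsPointerSeq i)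
    (h : ℕ → ℕ) (h0 : h 0 = 0) (hs : ∀ n, h (n + 1) = n) :
    ∀ n, ∀ m ∈ Vset i n, ∃ s : ℕ, m = (fun m => h (i m))^[s] (h n) := by
  intro n
  induction n using Nat.strong_induction_on with
  | _ n IH =>
    match n with
    | 0 => intro m hm; simp [Vset] at hm
    | n + 1 =>
      have hle : i n ≤ n := by
        cases n with
        | zero => simp [hi.1]
        | succ k => exact Nat.le_of_lt (hi.2 k)
      intro m hm
      rw [Vset, Finset.mem_insert, Nat.min_eq_left hle] at hm
      rcases hm with rfl | hm
      · exact ⟨0, by simp [hs]⟩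
      · obtain ⟨s, hsm⟩ := IH (i n) (Nat.lt_succ_of_le hle) m hm
        refine ⟨s + 1, ?_⟩
        rw [hsm, Function.iterate_succ_apply, hs]

/-- For an interaction sequence `i` and `h` with `h 0 = 0`, `h (n+1) = n`,
every value `i n` is of the form `(h ∘ i)^[s] (h n)` for some `s`. -/
theorem interaction_eq_iterate (i : ℕ → ℕ) (hi : IsInteractionSeq i)
    (h : ℕ → ℕ) (h0 : h 0 = 0) (hs : ∀ n, h (n + 1) = n) (n : ℕ) :
    ∃ s : ℕ, i n = (fun m => h (i m))^[s] (h n) := by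
  cases n with
  | zero => exact ⟨0, by simp [hi.1.1, h0]⟩
  | succ k => exact mem_Vset_iterate i hi.1 h h0 hs (k + 1) _ (hi.2 k)
end

section
/- Let i = i₀i₁i₂⋯ be an interaction sequence. If m is such that m ≠ i_n for every n > m, then the interval [i_m, m] is isolated. In particular, if i has depth at most ν and m has depth ν, then [i_m, m] is isolated. -/
set_option linter.deprecated false

lemma my_ile (i : ℕ → ℕ) (hp : IsPointerSeq i) : ∀ n, i n ≤ n := by
  intro n
  cases n with
  | zero => exact hp.1.le
  | succ k => exact (hp.2 k).le

lemma my_vset_lt (i : ℕ → ℕ) : ∀ n, ∀ x ∈ Vset i n, x < n := by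
  intro n
  induction n using Nat.strong_induction_on with
  | _ n IH =>
    cases n with
    | zero => intro x hx; simp [Vset] at hx
    | succ k =>
      intro x hx
      rw [Vset] at hx
      rcases Finset.mem_insert.mp hx with h | h
      · omega
      · have := IH (min (i k) k) (Nat.lt_succ_of_le (min_le_right _ _)) x h
        omega

lemma my_key (i : ℕ → ℕ) (hi : IsInteractionSeq i) (m : ℕ)
    (h : ∀ n, m < n → i n ≠ m) :
    ∀ n, m < n → ∀ x ∈ Vset i n, i m ≤ x → x ≤ m → x = m := by
  intro n
  induction n using Nat.strong_induction_on with
  | _ n IH =>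
    cases n with
    | zero => omega
    | succ k =>
      intro hmn x hx hx1 hx2
      have hik : i k ≤ k := my_ile i hi.1 k
      have hmink : min (i k) k = i k := min_eq_left hik
      rw [Vset, hmink] at hx
      rcases Finset.mem_insert.mp hx with h1 | h1
      · omega
      · -- x ∈ Vset i (i k)
        rcases Nat.lt_or_ge m k with hmk | hmk
        · -- m < k, so k ≥ 1, i k ∈ Vset i k, and i k ≠ m
          obtain ⟨j, rfl⟩ : ∃ j, k = j + 1 := ⟨k - 1, by omega⟩
          have hikV : i (j + 1) ∈ Vset i (j + 1) := hi.2 j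
          have hne : i (j + 1) ≠ m := h (j + 1) hmk
          -- i (j+1) ∉ [i m, m]
          have : ¬ (i m ≤ i (j + 1) ∧ i (j + 1) ≤ m) := by
            rintro ⟨ha, hb⟩
            exact hne (IH (j + 1) (Nat.lt_succ_self _) hmk _ hikV ha hb)
          rcases Nat.lt_or_ge (i (j + 1)) (i m) with hlt | hge
          · have := my_vset_lt i (i (j + 1)) x h1
            omega
          · have hgt : m < i (j + 1) := by omega
            exact IH (i (j + 1)) (Nat.lt_succ_of_lt (hi.1.2 j)) hgt x h1 hx1 hx2
        · -- m = k (since m < k+1 and m ≥ k)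
          have hm : m = k := by omega
          subst hm
          have := my_vset_lt i (i m) x h1
          omega

/-- If `m ≠ i n` for every `n > m`, then the interval `[i m, m]` is isolated.
In particular, if `i` has depth at most `ν` and `m` has depth `ν`, then `[i m, m]` is
isolated. -/
theorem interval_isolated (i : ℕ → ℕ) (hi : IsInteractionSeq i) (m : ℕ) :
    ((∀ n, m < n → i n ≠ m) → Isolated i (Set.Icc (i m) m)) ∧
    (∀ ν : ℕ, DepthAtMost i ν → chainLen i m = ν + 1 → Isolated i (Set.Icc (i m) m)) := by
  have part1 : (∀ n, m < n → i n ≠ m) → Isolated i (Set.Icc (i m) m) := by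
    intro h n hn
    simp only [Set.mem_Icc] at hn ⊢
    rcases Nat.lt_or_ge m n with hmn | hmn
    · exfalso
      obtain ⟨j, rfl⟩ : ∃ j, n = j + 1 := ⟨n - 1, by omega⟩
      have hikV : i (j + 1) ∈ Vset i (j + 1) := hi.2 j
      exact h (j + 1) hmn (my_key i hi m h (j + 1) hmn _ hikV hn.1 hn.2)
    · exact ⟨le_trans hn.1 (my_ile i hi.1 n), hmn⟩
  refine ⟨part1, fun ν hd hc => part1 ?_⟩
  intro n hn hne
  obtain ⟨j, rfl⟩ : ∃ j, n = j + 1 := ⟨n - 1, by omega⟩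
  have : min (i (j + 1)) j = m := by
    have := hi.1.2 j
    omega
  have hcn : chainLen i (j + 1) = chainLen i m + 1 := by
    rw [chainLen, this]
  have := hd (j + 1)
  omega
end

section
/- Let u = (α₀,i₀) α₁ be an ordinal interaction sequence of length 2 and let v be an ordinal interaction sequence with u ⪯ v. Then every ordinal appearing in v is ≤ max(α₀, α₁); in particular, every such v is below max(α₀, α₁)+1. -/
set_option linter.deprecated false

/-- If `u = (α₀, i₀) α₁` is an ordinal interaction sequence of length 2 and
`v` is an ordinal interaction sequence with `u ⪯ v`, then every ordinal of `v` is
`≤ max α₀ α₁`; in particular `v` is below `max α₀ α₁ + 1`. -/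
theorem extension_of_length_two_bounded (α₀ α₁ : Ordinal.{0}) (i₀ : ℕ)
    (hu : OIS.valid ⟨[(α₀, i₀)], α₁⟩)
    (v : OIS) (hv : v.valid) (huv : OIS.le ⟨[(α₀, i₀)], α₁⟩ v) :
    (∀ k, k ≤ v.pairs.length → v.ordAt k ≤ max α₀ α₁) ∧ v.below (max α₀ α₁ + 1) := by
  obtain ⟨hlen, heq, hlast⟩ := huv
  simp only [List.length_singleton, OIS.last] at hlen heq hlast
  have h0 : v.ordAt 0 = α₀ := by
    unfold OIS.ordAt
    rw [if_pos (lt_of_lt_of_le Nat.one_pos hlen), ← heq 0 Nat.one_pos]; rfl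
  have key : ∀ k, k ≤ v.pairs.length → v.ordAt k ≤ max α₀ α₁ := by
    intro k
    induction k using Nat.strong_induction_on with
    | _ k ih =>
      intro hk
      match k with
      | 0 => rw [h0]; exact le_max_left _ _
      | 1 => exact le_trans hlast (le_max_right _ _)
      | (m+2) =>
        have hlt := hv.2 (m+1) (Nat.succ_pos _) hk
        have hp : v.ptrAt (m+1) < m + 1 := hv.1.1.2 m (Nat.lt_of_succ_le hk)
        exact le_of_lt (lt_of_lt_of_le hlt
          (ih _ (lt_trans hp (Nat.lt_succ_self _))
            (le_of_lt (lt_of_lt_of_le hp (Nat.le_of_succ_le hk)))))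
  refine ⟨key, fun k hk => lt_of_le_of_lt (key k hk) ?_⟩
  rw [Ordinal.add_one_eq_succ]
  exact Order.lt_succ _
end

section
/- Fix a natural number ν and an ordinal α, and let T_ν be the tree of ordinal interaction sequences of depth at most ν below α (rooted at the empty sequence, ordered by ≺), assumed well-founded with height ρ. For u = (α₀,i₀)⋯(α_{n-1},i_{n-1}) αₙ in T_ν, let ρ_m denote the height in T_ν of the prefix (α₀,i₀)⋯(α_{m-1},i_{m-1}) α_m, and set c(u) = 3^{ρ₀} + ⋯ + 3^{ρ_{n-1}} + 3^{ρₙ}·2 (ordinal arithmetic), with c(empty) = 3^ρ. Then u ≺ v in T_ν implies c(u) > c(v). -/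
set_option linter.deprecated false

/-! Along an ordinal interaction sequence the heights `ρ₀ > ρ₁ > ⋯ > ρₙ` of its prefixes strictly
decrease, each prefix strictly preceding the next one in the tree. A sum
`3^{ρ₀} + ⋯ + 3^{ρ_{n-1}} + 3^{ρₙ}·2` with strictly descending exponents is `< 3^γ` as soon as
`ρ₀ < γ`. If `u ≺ v` and `u` has length `n`, then `c(u)` and `c(v)` share their first `n` terms,
and the rest of `c(v)` is the same kind of sum along `v` from its `n`-th prefix `v'` on, where
`u ⪯ v'`. If `v' = u`, then `v` is strictly longer and this tail is
`3^{ρₙ} + (a sum < 3^{ρₙ}) < 3^{ρₙ}·2`; otherwise `u ≺ v'`, so the tail is `< 3^{ρₙ}`. -/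

theorem Vset_congr {i j : ℕ → ℕ} {n : ℕ} (h : ∀ k < n, i k = j k) : Vset i n = Vset j n := by
  induction n using Nat.strong_induction_on with
  | _ n ih =>
    cases n with
    | zero => rw [Vset, Vset]
    | succ n =>
      rw [Vset, Vset, h n n.lt_succ_self,
        ih _ (Nat.lt_succ_of_le (min_le_right _ _)) fun k hk =>
          h k (hk.trans_le ((min_le_right _ _).trans n.le_succ))]

theorem chainLen_congr {i j : ℕ → ℕ} {n : ℕ} (h : ∀ k ≤ n, i k = j k) :
    chainLen i n = chainLen j n := by
  induction n using Nat.strong_induction_on with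
  | _ n ih =>
    cases n with
    | zero => rw [chainLen, chainLen]
    | succ n =>
      rw [chainLen, chainLen, h (n + 1) le_rfl,
        ih _ (Nat.lt_succ_of_le (min_le_right _ _)) fun k hk =>
          h k (hk.trans ((min_le_right _ _).trans n.le_succ))]

theorem IsInteractionSeqUpTo.mono {m n : ℕ} {i : ℕ → ℕ} (h : IsInteractionSeqUpTo n i)
    (hmn : m ≤ n) : IsInteractionSeqUpTo m i :=
  ⟨⟨fun hm => h.1.1 (hm.trans_le hmn), fun k hk => h.1.2 k (hk.trans_le hmn)⟩,
    fun k hk => h.2 k (hk.trans_le hmn)⟩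

theorem IsInteractionSeqUpTo.congr {n : ℕ} {i j : ℕ → ℕ} (h : IsInteractionSeqUpTo n i)
    (hij : ∀ k < n, i k = j k) : IsInteractionSeqUpTo n j := by
  refine ⟨⟨fun hn => hij 0 hn ▸ h.1.1 hn, fun k hk => hij (k + 1) hk ▸ h.1.2 k hk⟩,
    fun k hk => ?_⟩
  rw [← hij (k + 1) hk, ← Vset_congr fun l hl => hij l (hl.trans hk)]
  exact h.2 k hk

theorem DepthAtMostUpTo.mono {m n ν : ℕ} {i : ℕ → ℕ} (h : DepthAtMostUpTo n i ν)
    (hmn : m ≤ n) : DepthAtMostUpTo m i ν :=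
  fun k hk => h k (hk.trans_le hmn)

theorem DepthAtMostUpTo.congr {n ν : ℕ} {i j : ℕ → ℕ} (h : DepthAtMostUpTo n i ν)
    (hij : ∀ k < n, i k = j k) : DepthAtMostUpTo n j ν := fun k hk => by
  rw [← chainLen_congr fun l hl => hij l (hl.trans_lt hk)]
  exact h k hk

namespace OIS

theorem ext {u v : OIS} (hp : u.pairs = v.pairs) (hl : u.last = v.last) : u = v := by
  cases u; cases v; simp_all

theorem length_prefixAt (u : OIS) {m : ℕ} (hm : m ≤ u.pairs.length) :
    (u.prefixAt m).pairs.length = m := by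
  simp [prefixAt, hm]

theorem getD_prefixAt (u : OIS) {k m : ℕ} (hk : k < m) :
    (u.prefixAt m).pairs.getD k (0, 0) = u.pairs.getD k (0, 0) := by
  simp only [prefixAt, List.getD_eq_getElem?_getD, List.getElem?_take_of_lt hk]

theorem ptrAt_prefixAt (u : OIS) {k m : ℕ} (hk : k < m) : (u.prefixAt m).ptrAt k = u.ptrAt k :=
  congrArg Prod.snd (u.getD_prefixAt hk)

theorem ordAt_prefixAt (u : OIS) {k m : ℕ} (hk : k ≤ m) (hm : m ≤ u.pairs.length) :
    (u.prefixAt m).ordAt k = u.ordAt k := by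
  rcases hk.lt_or_eq with hk | rfl
  · simp only [ordAt, u.length_prefixAt hm, if_pos hk, if_pos (hk.trans_le hm), u.getD_prefixAt hk]
  · simp [ordAt, prefixAt]

theorem prefixAt_length (u : OIS) : u.prefixAt u.pairs.length = u :=
  ext List.take_length (by simp [prefixAt, ordAt])

theorem valid_prefixAt {u : OIS} (hu : u.valid) {m : ℕ} (hm : m ≤ u.pairs.length) :
    (u.prefixAt m).valid := by
  have hptr : ∀ k < m, u.ptrAt k = (u.prefixAt m).ptrAt k :=
    fun k hk => (u.ptrAt_prefixAt hk).symm
  refine ⟨?_, fun k hk0 hk => ?_⟩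
  · rw [u.length_prefixAt hm]
    exact (hu.1.mono hm).congr hptr
  · rw [u.length_prefixAt hm] at hk
    have hptr_lt : u.ptrAt k < k := by
      obtain ⟨k, rfl⟩ := Nat.exists_eq_add_one_of_ne_zero hk0.ne'
      exact hu.1.1.2 k (by omega)
    rw [u.ordAt_prefixAt hk hm, ← hptr k (by omega), u.ordAt_prefixAt (by omega) hm]
    exact hu.2 k hk0 (hk.trans hm)

theorem depthLE_prefixAt {u : OIS} {ν : ℕ} (hu : u.depthLE ν) {m : ℕ}
    (hm : m ≤ u.pairs.length) : (u.prefixAt m).depthLE ν := by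
  rw [depthLE, u.length_prefixAt hm]
  exact (DepthAtMostUpTo.mono hu hm).congr fun k hk => (u.ptrAt_prefixAt hk).symm

theorem below_prefixAt {u : OIS} {α : Ordinal} (hu : u.below α) {m : ℕ}
    (hm : m ≤ u.pairs.length) : (u.prefixAt m).below α := fun k hk => by
  rw [u.length_prefixAt hm] at hk
  rw [u.ordAt_prefixAt hk hm]
  exact hu k (hk.trans hm)

theorem prefixAt_prec_prefixAt_succ (u : OIS) {m : ℕ} (hm : m < u.pairs.length) :
    (u.prefixAt m).prec (u.prefixAt (m + 1)) := by
  have hlen := u.length_prefixAt hm.le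
  refine ⟨⟨?_, fun k hk => ?_, ?_⟩, fun h => ?_⟩
  · rw [hlen, u.length_prefixAt hm]
    exact m.le_succ
  · rw [hlen] at hk
    rw [u.getD_prefixAt hk, u.getD_prefixAt (hk.trans m.lt_succ_self)]
  · rw [hlen, u.ordAt_prefixAt m.le_succ hm]
    rfl
  · have := congrArg (fun w => w.pairs.length) h
    simp only [hlen, u.length_prefixAt hm] at this
    omega

theorem pairs_eq_take_of_le {u v : OIS} (h : u.le v) :
    u.pairs = v.pairs.take u.pairs.length := by
  refine List.ext_getElem (by simp [h.1]) fun k hk _ => ?_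
  have := h.2.1 k hk
  rw [List.getD_eq_getElem _ _ hk, List.getD_eq_getElem _ _ (hk.trans_le h.1)] at this
  simp [this]

theorem prefixAt_eq_of_le {u v : OIS} (h : u.le v) {k : ℕ} (hk : k < u.pairs.length) :
    u.prefixAt k = v.prefixAt k := by
  refine ext ?_ ?_
  · simp only [prefixAt]
    rw [pairs_eq_take_of_le h, List.take_take, min_eq_left hk.le]
  · simp only [prefixAt, ordAt, if_pos hk, if_pos (hk.trans_le h.1), h.2.1 k hk]

theorem le_prefixAt_length {u v : OIS} (h : u.le v) : u.le (v.prefixAt u.pairs.length) := by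
  refine ⟨(v.length_prefixAt h.1).ge, fun k hk => ?_, ?_⟩
  · rw [v.getD_prefixAt hk]
    exact h.2.1 k hk
  · rw [v.ordAt_prefixAt le_rfl h.1]
    exact h.2.2

end OIS

theorem inTree_prefixAt {ν : ℕ} {α : Ordinal.{0}} {u : OIS} (hu : InTree ν α (some u)) {m : ℕ}
    (hm : m ≤ u.pairs.length) : InTree ν α (some (u.prefixAt m)) :=
  ⟨OIS.valid_prefixAt hu.1 hm, OIS.depthLE_prefixAt hu.2.1 hm, OIS.below_prefixAt hu.2.2 hm⟩

section CantorNormalForm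

universe u

variable {b : Ordinal.{u}}

noncomputable def cnfValue (b : Ordinal.{u}) (f : ℕ → Ordinal.{u}) (n : ℕ) : Ordinal.{u} :=
  ((List.range n).map fun m => b ^ f m).sum + b ^ f n * 2

theorem cnfValue_succ (b : Ordinal.{u}) (f : ℕ → Ordinal.{u}) (n : ℕ) :
    cnfValue b f (n + 1) = b ^ f 0 + cnfValue b (fun k => f (k + 1)) n := by
  simp only [cnfValue, List.range_succ_eq_map, List.map_cons, List.map_map, List.sum_cons,
    add_assoc]
  rfl

theorem cnfValue_add (b : Ordinal.{u}) (f : ℕ → Ordinal.{u}) (m n : ℕ) :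
    cnfValue b f (m + n) =
      ((List.range m).map fun k => b ^ f k).sum + cnfValue b (fun k => f (m + k)) n := by
  simp only [cnfValue, List.range_add, List.map_append, List.sum_append, List.map_map, add_assoc]
  rfl

theorem opow_mul_two_lt (hb : 2 < b) {x y : Ordinal.{u}} (h : x < y) : b ^ x * 2 < b ^ y := by
  have hb0 : 0 < b := zero_lt_two.trans hb
  calc b ^ x * 2 < b ^ x * b := mul_lt_mul_of_pos_left hb (Ordinal.opow_pos x hb0)
    _ = b ^ Order.succ x := (Ordinal.opow_succ b x).symm
    _ ≤ b ^ y := Ordinal.opow_le_opow_right hb0 (Order.succ_le_of_lt h)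

theorem cnfValue_lt_opow (hb : 2 < b) {f : ℕ → Ordinal.{u}} {n : ℕ} {c : Ordinal.{u}}
    (hf : ∀ k < n, f (k + 1) < f k) (hc : f 0 < c) : cnfValue b f n < b ^ c := by
  induction n generalizing f c with
  | zero => simpa [cnfValue] using opow_mul_two_lt hb hc
  | succ n ih =>
    have htail : cnfValue b (fun k => f (k + 1)) n < b ^ f 0 :=
      ih (fun k hk => hf (k + 1) (by omega)) (hf 0 (by omega))
    calc cnfValue b f (n + 1) = b ^ f 0 + cnfValue b (fun k => f (k + 1)) n := cnfValue_succ ..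
      _ < b ^ f 0 * 2 := by rw [Ordinal.mul_two]; exact add_lt_add_right htail _
      _ < b ^ c := opow_mul_two_lt hb hc

theorem cnfValue_lt_opow_mul_two (hb : 2 < b) {f : ℕ → Ordinal.{u}} {n : ℕ} {c : Ordinal.{u}}
    (hf : ∀ k < n, f (k + 1) < f k) (hc : f 0 < c ∨ f 0 = c ∧ 0 < n) :
    cnfValue b f n < b ^ c * 2 := by
  rcases hc with hc | ⟨rfl, hn⟩
  · exact (cnfValue_lt_opow hb hf hc).trans_le (Ordinal.le_mul_left _ zero_lt_two)
  · obtain ⟨n, rfl⟩ := Nat.exists_eq_add_one_of_ne_zero hn.ne'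
    rw [cnfValue_succ, Ordinal.mul_two]
    exact add_lt_add_right (cnfValue_lt_opow hb (fun k hk => hf (k + 1) (by omega))
      (hf 0 (by omega))) _

end CantorNormalForm

section Height

variable {ν : ℕ} {α : Ordinal.{0}} (hwf : WellFounded (treeRel ν α))

noncomputable def height (x : Option OIS) : Ordinal.{1} := (hwf.apply x).rank

/-- The height `ρ_m` of the `m`-th prefix of `u`. -/
noncomputable def prefixHeight (u : OIS) (m : ℕ) : Ordinal.{1} :=
  height hwf (some (u.prefixAt m))

theorem height_lt_of_optPrec {x y : Option OIS} (hx : InTree ν α x) (hy : InTree ν α y)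
    (h : OptPrec x y) : height hwf y < height hwf x :=
  Acc.rank_lt_of_rel _ ⟨h, hy, hx⟩

theorem prefixHeight_succ_lt {u : OIS} (hu : InTree ν α (some u)) {m : ℕ}
    (hm : m < u.pairs.length) : prefixHeight hwf u (m + 1) < prefixHeight hwf u m :=
  height_lt_of_optPrec hwf (inTree_prefixAt hu hm.le) (inTree_prefixAt hu hm)
    (u.prefixAt_prec_prefixAt_succ hm)

theorem cnfValue_prefixHeight_lt_height_root {v : OIS} (hv : InTree ν α (some v)) :
    cnfValue 3 (prefixHeight hwf v) v.pairs.length < 3 ^ height hwf none :=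
  cnfValue_lt_opow (by norm_num) (fun _ => prefixHeight_succ_lt hwf hv)
    (height_lt_of_optPrec hwf trivial (inTree_prefixAt hv (Nat.zero_le _)) trivial)

theorem cnfValue_prefixHeight_lt_of_prec {u v : OIS} (hu : InTree ν α (some u))
    (hv : InTree ν α (some v)) (h : u.prec v) :
    cnfValue 3 (prefixHeight hwf v) v.pairs.length <
      cnfValue 3 (prefixHeight hwf u) u.pairs.length := by
  obtain ⟨hle, hne⟩ := h
  obtain ⟨d, hd⟩ := Nat.exists_eq_add_of_le hle.1
  have hhead : ((List.range u.pairs.length).map fun k => (3 : Ordinal) ^ prefixHeight hwf v k) =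
      (List.range u.pairs.length).map fun k => (3 : Ordinal) ^ prefixHeight hwf u k :=
    List.map_congr_left fun k hk => by
      rw [prefixHeight, prefixHeight, OIS.prefixAt_eq_of_le hle (List.mem_range.1 hk)]
  have hlast : prefixHeight hwf u u.pairs.length = height hwf (some u) := by
    rw [prefixHeight, u.prefixAt_length]
  have htail : cnfValue 3 (fun k => prefixHeight hwf v (u.pairs.length + k)) d <
      3 ^ prefixHeight hwf u u.pairs.length * 2 := by
    refine cnfValue_lt_opow_mul_two (by norm_num)
      (fun k hk => prefixHeight_succ_lt hwf hv (m := u.pairs.length + k) (by omega)) ?_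
    rw [hlast, add_zero]
    rcases eq_or_ne (v.prefixAt u.pairs.length) u with heq | hne'
    · refine Or.inr ⟨by rw [prefixHeight, heq], Nat.pos_of_ne_zero fun hd0 => hne ?_⟩
      have hlen : u.pairs.length = v.pairs.length := by omega
      rw [← heq, hlen, v.prefixAt_length]
    · exact Or.inl (height_lt_of_optPrec hwf hu (inTree_prefixAt hv hle.1)
        ⟨OIS.le_prefixAt_length hle, hne'.symm⟩)
  rw [hd, cnfValue_add, hhead]
  exact add_lt_add_right htail _

end Height

/-- With `T_ν` the (well-founded) tree of ordinal interaction sequences of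
depth at most `ν` below `α` rooted at the empty sequence, heights given by the rank of the
reversed `≺`, and `c(u) = 3^{ρ₀} + ⋯ + 3^{ρ_{n-1}} + 3^{ρₙ}·2` (`ρ_m` the height of the
prefix of `u` of length `m`), `c(⟨⟩) = 3^ρ`:  `u ≺ v` in `T_ν` implies `c u > c v`. -/
theorem cnf_height_function (ν : ℕ) (α : Ordinal.{0})
    (hwf : WellFounded (treeRel ν α)) (c : Option OIS → Ordinal.{1})
    (hc0 : c none = 3 ^ (hwf.apply (none : Option OIS)).rank)
    (hcu : ∀ u : OIS, InTree ν α (some u) →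
      c (some u) =
        ((List.range u.pairs.length).map
            (fun m => (3 : Ordinal.{1}) ^ (hwf.apply (some (u.prefixAt m))).rank)).sum +
          3 ^ (hwf.apply (some (u.prefixAt u.pairs.length))).rank * 2)
    (x y : Option OIS) (hx : InTree ν α x) (hy : InTree ν α y) (hxy : OptPrec x y) :
    c y < c x := by
  have hc : ∀ u, InTree ν α (some u) →
      c (some u) = cnfValue 3 (prefixHeight hwf u) u.pairs.length := hcu
  match x, y, hxy with
  | none, some v, _ =>
    rw [hc0, hc v hy]
    exact cnfValue_prefixHeight_lt_height_root hwf hy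
  | some u, some v, huv =>
    rw [hc u hx, hc v hy]
    exact cnfValue_prefixHeight_lt_of_prec hwf hx hy huv
end

section
/- Define the infinite sequence i : ℕ → ℕ by i₀ = i₁ = 0, i₂ = 1, and for all n ≥ 0: i_{2n+3} = 2 and i_{2n+4} = 2n+3 (that is, the sequence 0, 0, 1, 2, 3, 2, 5, 2, 7, 2, …). Then i is an infinite interaction sequence of depth at most 4. -/
set_option linter.deprecated false

/-- The sequence `0, 0, 1, 2, 3, 2, 5, 2, 7, 2, …` (i.e. `i 0 = i 1 = 0`,
`i 2 = 1`, `i (2n+3) = 2`, `i (2n+4) = 2n+3`) is an infinite interaction sequence of depth at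
most 4. -/
theorem example_interaction_sequence (i : ℕ → ℕ)
    (h0 : i 0 = 0) (h1 : i 1 = 0) (h2 : i 2 = 1)
    (h3 : ∀ n, i (2 * n + 3) = 2) (h4 : ∀ n, i (2 * n + 4) = 2 * n + 3) :
    IsInteractionSeq i ∧ DepthAtMost i 4 := by
  have hptr : ∀ n, i (n + 1) < n + 1 := by
    intro n
    match n with
    | 0 => norm_num [h1]
    | 1 => norm_num [h2]
    | m + 2 =>
      obtain ⟨k, rfl | rfl⟩ : ∃ k, m = 2 * k ∨ m = 2 * k + 1 := ⟨m / 2, by omega⟩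
      · have e : 2 * k + 2 + 1 = 2 * k + 3 := by omega
        rw [e, h3 k]; omega
      · have := h4 k
        have e : 2 * k + 1 + 2 + 1 = 2 * k + 4 := by omega
        rw [e]; omega
  have hle : ∀ n, i n ≤ n := by
    intro n
    match n with
    | 0 => omega
    | m + 1 => exact Nat.le_of_lt (hptr m)
  have hmin : ∀ n, min (i n) n = i n := fun n => min_eq_left (hle n)
  have hV : ∀ n, Vset i (n + 1) = insert n (Vset i (i n)) := by
    intro n; rw [Vset, hmin]
  have h2V : ∀ m, (2 : ℕ) ∈ Vset i (2 * m + 3) := by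
    intro m
    induction m with
    | zero => rw [hV]; exact Finset.mem_insert_self 2 _
    | succ k ih =>
      have e : 2 * (k + 1) + 3 = 2 * k + 4 + 1 := by omega
      rw [e, hV, h4 k]
      exact Finset.mem_insert_of_mem ih
  have hinter : ∀ n, i (n + 1) ∈ Vset i (n + 1) := by
    intro n
    match n with
    | 0 => rw [h1, hV]; exact Finset.mem_insert_self 0 _
    | 1 => rw [h2, hV]; exact Finset.mem_insert_self 1 _
    | m + 2 =>
      obtain ⟨k, rfl | rfl⟩ : ∃ k, m = 2 * k ∨ m = 2 * k + 1 := ⟨m / 2, by omega⟩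
      · rw [h3 k, hV]
        rcases k with _ | k'
        · norm_num
        · have e : 2 * (k' + 1) + 2 = 2 * k' + 4 := by omega
          rw [e, h4 k']
          exact Finset.mem_insert_of_mem (h2V k')
      · have e : 2 * k + 1 + 2 + 1 = 2 * k + 3 + 1 := by omega
        rw [e, h4 k, hV]
        exact Finset.mem_insert_self _ _
  have hCmin : ∀ n, chainLen i (n + 1) = chainLen i (i (n + 1)) + 1 := by
    intro n
    rw [chainLen]
    congr 2
    exact min_eq_left (Nat.lt_succ_iff.mp (hptr n))
  have hc0 : chainLen i 0 = 1 := by rw [chainLen]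
  have hc1 : chainLen i 1 = 2 := by rw [hCmin 0, h1, hc0]
  have hc2 : chainLen i 2 = 3 := by rw [hCmin 1, h2, hc1]
  have hc3 : ∀ k, chainLen i (2 * k + 3) = 4 := by
    intro k
    have e : 2 * k + 3 = (2 * k + 2) + 1 := by omega
    rw [e, hCmin, ← e, h3 k, hc2]
  have hc4 : ∀ k, chainLen i (2 * k + 4) = 5 := by
    intro k
    have e : 2 * k + 4 = (2 * k + 3) + 1 := by omega
    rw [e, hCmin, ← e, h4 k, hc3 k]
  refine ⟨⟨⟨h0, hptr⟩, hinter⟩, ?_⟩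
  intro n
  match n with
  | 0 => omega
  | 1 => omega
  | 2 => omega
  | m + 3 =>
    obtain ⟨k, rfl | rfl⟩ : ∃ k, m = 2 * k ∨ m = 2 * k + 1 := ⟨m / 2, by omega⟩
    · rw [hc3 k]; omega
    · have e : 2 * k + 1 + 3 = 2 * k + 4 := by omega
      rw [e, hc4 k]
end
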